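/- arXiv:2508.20980 — 4 statements merged into one kernel-verified Lean document; each statement's English description precedes it below -/
import Mathlib

section
/- The per-channel-use terms of the outer bound are nondecreasing in the time index: t_j ≤ t_{j+1} for every integer j ≥ 1. -/
open Finset Filter Topology

/-- Binary entropy function with base-2 logarithm. `Real.logb 2 0 = 0`, so
`H2 0 = H2 1 = 0` automatically. -/
noncomputable def H2 (p : ℝ) : ℝ :=
  -(p * Real.logb 2 p) - (1 - p) * Real.logb 2 (1 - p)

/-- Partial sums `s_j = ∑_{k=1}^j c_k` of the beam-budget sequence. -/
noncomputable def s (K B : ℝ) : ℕ → ℝ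
  | 0 => 0
  | (j+1) => s K B j + min ((K - s K B j) / 2) B

/-- The beam-budget sequence: `c_0 = 0` and `c_j = min((K - s_{j-1})/2, B)` for `j ≥ 1`. -/
noncomputable def c (K B : ℝ) : ℕ → ℝ
  | 0 => 0
  | (j+1) => min ((K - s K B j) / 2) B

/-- The `j`-th term of the outer bound (Theorem 1), for `j ≥ 1`. -/
noncomputable def t (K B : ℝ) (j : ℕ) : ℝ :=
  (1 - s K B (j-1) / K) * H2 (c K B j / (K - s K B (j-1))) + s K B (j-1) / K

/-- The outer-bound (Theorem 1) expression `U(L)`. -/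
noncomputable def U (K B : ℝ) (L : ℕ) : ℝ :=
  (1 / (L : ℝ)) * ∑ j ∈ Finset.Icc 1 L, t K B j

/-- The `j`-th eavesdropper-leakage term, for `j ≥ 1` (natural subtraction makes the
middle term vanish at `j = 1` and the final sum empty for `j ≤ 3`). -/
noncomputable def g (K B : ℝ) (j : ℕ) : ℝ :=
  ((K - s K B (j-1)) / K) * H2 (c K B j / K)
  + (c K B (j-1) * (K - s K B (j-2)) / K^2) *
      H2 ((1/2) * c K B (j-1) / (K - s K B (j-2)))
  + ∑ k ∈ Finset.Icc 1 (j-3),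
      (1/K) * ((c K B (k+1))^2 / K^2) * (1/2 : ℝ)^(2*(j-k-2)-1)

/-- The gap `G(L)` between the outer and inner bounds. -/
noncomputable def G (K B : ℝ) (L : ℕ) : ℝ :=
  (1 / (L : ℝ)) * ∑ j ∈ Finset.Icc 1 L, g K B j

/-- The inner-bound (Theorem 2) expression `I(L) = U(L) - G(L)`. -/
noncomputable def Ib (K B : ℝ) (L : ℕ) : ℝ := U K B L - G K B L


/-! With `r_j = K - s_j` the beam budget still unspent after `j` uses, the `(j+1)`-st term is
`t_{j+1} = 1 - φ(r_j) / K`, where `φ(r) = r (1 - H₂(min(r/2, B) / r))`. Since `c_{j+1} > 0` the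
remaining budget `r_j` decreases, so it suffices that `φ` is monotone on `(0, ∞)`. For `r ≤ 2B`
we have `φ(r) = r (1 - H₂(1/2)) = 0`; for `r ≥ 2B`, `φ(r) · log 2` is
`r log 2 + B log B + (r - B) log (r - B) - r log r`, whose derivative `log (2 (r - B) / r)` is
nonnegative exactly when `r ≥ 2B`. -/

open Real Set

lemma H2_eq_binEntropy_div_log_two (p : ℝ) : H2 p = binEntropy p / log 2 := by
  simp only [H2, binEntropy, logb, log_inv]
  ring

lemma H2_le_one (p : ℝ) : H2 p ≤ 1 := by
  rw [H2_eq_binEntropy_div_log_two, div_le_one (log_pos one_lt_two)]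
  exact binEntropy_le_log_two

lemma H2_two_inv : H2 2⁻¹ = 1 := by
  rw [H2_eq_binEntropy_div_log_two, binEntropy_two_inv, div_self (log_pos one_lt_two).ne']

noncomputable def entropyDeficit (B r : ℝ) : ℝ := r * (1 - H2 (min (r / 2) B / r))

/-- `entropyDeficit B r * log 2` on the range `2 * B ≤ r`, where the minimum is `B`. -/
noncomputable def entropyDeficitNats (B r : ℝ) : ℝ :=
  r * log 2 + B * log B + (r - B) * log (r - B) - r * log r

lemma hasDerivAt_entropyDeficitNats {B r : ℝ} (hB : 0 < B) (hr : B < r) :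
    HasDerivAt (entropyDeficitNats B) (log 2 + log (r - B) - log r) r := by
  have hlin : HasDerivAt (fun x : ℝ => x * log 2) (log 2) r := by
    simpa using (hasDerivAt_id r).mul_const (log 2)
  have hshift : HasDerivAt (fun x : ℝ => (x - B) * log (x - B)) (log (r - B) + 1) r := by
    exact ((hasDerivAt_mul_log (sub_pos.2 hr).ne').comp r ((hasDerivAt_id r).sub_const B)).congr_deriv
      (mul_one _)
  exact (((hlin.add_const (B * log B)).add hshift).sub
    (hasDerivAt_mul_log (hB.trans hr).ne')).congr_deriv (by ring)

lemma monotoneOn_entropyDeficitNats {B : ℝ} (hB : 0 < B) :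
    MonotoneOn (entropyDeficitNats B) (Ici (2 * B)) := by
  refine monotoneOn_of_hasDerivWithinAt_nonneg (f' := fun r => log 2 + log (r - B) - log r)
    (convex_Ici _) ?_ (fun r hr => ?_) (fun r hr => ?_)
  · unfold entropyDeficitNats
    have := continuous_mul_log.comp (continuous_sub_right B)
    fun_prop
  all_goals
    rw [interior_Ici, Set.mem_Ioi] at hr
  · exact (hasDerivAt_entropyDeficitNats hB (by linarith)).hasDerivWithinAt
  · have hlog : log r ≤ log (2 * (r - B)) := log_le_log (by linarith) (by linarith)
    rw [log_mul two_ne_zero (by linarith)] at hlog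
    linarith

lemma entropyDeficit_of_le {B r : ℝ} (hr : 0 < r) (h : r ≤ 2 * B) : entropyDeficit B r = 0 := by
  rw [entropyDeficit, min_eq_left (by linarith), div_div_cancel_left' hr.ne', H2_two_inv]
  ring

lemma entropyDeficit_of_ge {B r : ℝ} (hB : 0 < B) (h : 2 * B ≤ r) :
    entropyDeficit B r = entropyDeficitNats B r / log 2 := by
  have hr : 0 < r := by linarith
  have hrB : 0 < r - B := by linarith
  have hcompl : 1 - B / r = (r - B) / r := by field_simp
  rw [entropyDeficit, min_eq_right (by linarith), H2, hcompl, logb, logb,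
    log_div hB.ne' hr.ne', log_div hrB.ne' hr.ne', entropyDeficitNats]
  have := (log_pos one_lt_two).ne'
  field_simp
  ring

lemma entropyDeficit_nonneg (B : ℝ) {r : ℝ} (hr : 0 ≤ r) : 0 ≤ entropyDeficit B r :=
  mul_nonneg hr (sub_nonneg.2 (H2_le_one _))

lemma monotoneOn_entropyDeficit {B : ℝ} (hB : 0 < B) : MonotoneOn (entropyDeficit B) (Ioi 0) := by
  intro r' hr' r _ hle
  rcases le_or_gt r' (2 * B) with hsmall | hlarge
  · rw [entropyDeficit_of_le hr' hsmall]
    exact entropyDeficit_nonneg B (le_of_lt (lt_of_lt_of_le hr' hle))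
  · rw [entropyDeficit_of_ge hB hlarge.le, entropyDeficit_of_ge hB (hlarge.le.trans hle)]
    gcongr
    exact monotoneOn_entropyDeficitNats hB hlarge.le (hlarge.le.trans hle) hle

lemma s_succ (K B : ℝ) (j : ℕ) : s K B (j + 1) = s K B j + c K B (j + 1) := rfl

section BeamBudget

variable {K B : ℝ}

lemma s_lt (hK : 0 < K) (j : ℕ) : s K B j < K := by
  induction j with
  | zero => exact hK
  | succ j ih =>
    rw [s_succ, c]
    linarith [min_le_left ((K - s K B j) / 2) B]

lemma s_monotone (hK : 0 < K) (hB : 0 < B) : Monotone (s K B) :=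
  monotone_nat_of_le_succ fun j => by
    rw [s_succ, c]
    linarith [lt_min (div_pos (sub_pos.2 (s_lt (B := B) hK j)) two_pos) hB]

lemma t_succ_eq (hK : 0 < K) (j : ℕ) :
    t K B (j + 1) = 1 - entropyDeficit B (K - s K B j) / K := by
  have hr : K - s K B j ≠ 0 := (sub_pos.2 (s_lt hK j)).ne'
  rw [t, Nat.add_sub_cancel, c, entropyDeficit]
  field_simp
  ring

end BeamBudget

theorem stmt_7 (K : ℕ) (hK : 2 ≤ K) (B : ℝ) (hB : 0 < B) :
    ∀ j : ℕ, 1 ≤ j → t K B j ≤ t K B (j+1) := by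
  intro j hj
  obtain ⟨j, rfl⟩ := Nat.exists_eq_add_of_le' hj
  have hK' : (0 : ℝ) < K := by exact_mod_cast (by omega : 0 < K)
  rw [t_succ_eq hK' j, t_succ_eq hK' (j + 1)]
  have hdeficit := monotoneOn_entropyDeficit hB (sub_pos.2 (s_lt hK' (j + 1)))
    (sub_pos.2 (s_lt hK' j)) (sub_le_sub_left (s_monotone hK' hB j.le_succ) _)
  gcongr
end

section
/- The partial sums of the beam-budget sequence exhaust the total number of directions: s_j → K as j → ∞ (equivalently, K - s_j → 0). -/
open Finset Filter Topology

theorem stmt_10 (K : ℕ) (hK : 2 ≤ K) (B : ℝ) (hB : 0 < B) :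
    Tendsto (fun j : ℕ => s K B j) atTop (𝓝 (K : ℝ)) ∧
    Tendsto (fun j : ℕ => (K : ℝ) - s K B j) atTop (𝓝 0) := by
  obtain ⟨f, hfdef⟩ : ∃ f : ℕ → ℝ, ∀ j, f j = (K:ℝ) - s K B j :=
    ⟨fun j => (K:ℝ) - s K B j, fun j => rfl⟩
  have hrec : ∀ j, f (j+1) = f j - min (f j / 2) B := by
    intro j; rw [hfdef, hfdef, s]; ring_nf
  have hpos : ∀ j, 0 ≤ f j := by
    intro j
    induction j with
    | zero =>
      rw [hfdef, s]
      simp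
    | succ n ih =>
      rw [hrec]
      have h2 : min (f n / 2) B ≤ f n / 2 := min_le_left _ _
      linarith
  have hanti : Antitone f := by
    apply antitone_nat_of_succ_le
    intro n
    rw [hrec]
    have h1 : 0 ≤ min (f n / 2) B := le_min (by linarith [hpos n]) hB.le
    linarith
  have hbdd : BddBelow (Set.range f) := ⟨0, by rintro x ⟨j, rfl⟩; exact hpos j⟩
  have hlim : Tendsto f atTop (𝓝 (⨅ i, f i)) := tendsto_atTop_ciInf hanti hbdd
  set L := ⨅ i, f i with hL
  have hL0 : 0 ≤ L := le_ciInf hpos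
  have hlim2 : Tendsto (fun j => f (j+1)) atTop (𝓝 L) :=
    hlim.comp (tendsto_add_atTop_nat 1)
  have hlim3 : Tendsto (fun j => f j - min (f j / 2) B) atTop (𝓝 (L - min (L / 2) B)) :=
    hlim.sub (Tendsto.min (hlim.div_const 2) tendsto_const_nhds)
  have heq : L = L - min (L / 2) B := by
    refine tendsto_nhds_unique hlim2 ?_
    simpa only [hrec] using hlim3
  have hmin0 : min (L / 2) B = 0 := by linarith
  have hLzero : L = 0 := by
    by_contra h
    have hLpos : 0 < L := lt_of_le_of_ne hL0 (Ne.symm h)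
    have : 0 < min (L / 2) B := lt_min (by linarith) hB
    linarith
  rw [hLzero] at hlim
  have hlim' : Tendsto (fun j : ℕ => (K : ℝ) - s K B j) atTop (𝓝 0) := by
    have : (fun j : ℕ => (K : ℝ) - s K B j) = f := by funext j; rw [hfdef]
    rw [this]; exact hlim
  constructor
  · have h2 : Tendsto (fun j : ℕ => (K:ℝ) - ((K:ℝ) - s K B j)) atTop (𝓝 ((K:ℝ) - 0)) :=
      tendsto_const_nhds.sub hlim'
    simpa using h2
  · exact hlim'
end

section
/- The eavesdropper-leakage terms vanish asymptotically: g_j → 0 as j → ∞. -/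
open Finset Filter Topology

lemma H2_eq (p : ℝ) : H2 p = (Real.negMulLog p + Real.negMulLog (1 - p)) / Real.log 2 := by
  simp [H2, Real.negMulLog, Real.logb]
  ring

lemma continuous_H2 : Continuous H2 := by
  have : H2 = fun p => (Real.negMulLog p + Real.negMulLog (1 - p)) / Real.log 2 := by
    funext p; exact H2_eq p
  rw [this]
  fun_prop

lemma H2_zero : H2 0 = 0 := by simp [H2]

lemma d_pos {K B : ℝ} (hK : 0 < K) : ∀ j, 0 < K - s K B j := by
  intro j
  induction j with
  | zero => simpa [s] using hK
  | succ n ih =>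
    have : min ((K - s K B n) / 2) B ≤ (K - s K B n) / 2 := min_le_left _ _
    simp only [s]
    linarith

lemma s_nonneg {K B : ℝ} (hK : 0 < K) (hB : 0 < B) : ∀ n, 0 ≤ s K B n := by
  intro n
  induction n with
  | zero => simp [s]
  | succ m ihm =>
    have := d_pos hK (B := B) m
    simp only [s]
    have h1 : (0:ℝ) < (K - s K B m)/2 := by linarith
    have : 0 < min ((K - s K B m)/2) B := lt_min h1 hB
    linarith

lemma d_le {K B : ℝ} (hB : 0 < B) (hKB : 0 < K) : ∀ j, K - s K B j ≤ K * (max (1/2) (1 - B/K)) ^ j := by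
  intro j
  set q := max (1/2 : ℝ) (1 - B/K) with hq
  induction j with
  | zero => simp [s]
  | succ n ih =>
    have hd := d_pos hKB (B := B) n
    have hdK : K - s K B n ≤ K := by
      have := s_nonneg hKB hB n
      linarith
    have hq0 : (0:ℝ) ≤ q := le_trans (by norm_num) (le_max_left _ _)
    simp only [s]
    have key : (K - s K B n) - min ((K - s K B n)/2) B ≤ q * (K - s K B n) := by
      rcases le_or_gt ((K - s K B n)/2) B with h | h
      · rw [min_eq_left h]
        have : (1/2 : ℝ) ≤ q := le_max_left _ _
        nlinarith
      · rw [min_eq_right h.le]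
        have h2 : 1 - B/K ≤ q := le_max_right _ _
        have : B * (K - s K B n) ≤ B * K := by nlinarith
        have hBK : (B/K) * (K - s K B n) ≤ B := by
          rw [div_mul_eq_mul_div, div_le_iff₀ hKB]; nlinarith
        nlinarith
    calc K - (s K B n + min ((K - s K B n)/2) B)
        = (K - s K B n) - min ((K - s K B n)/2) B := by ring
      _ ≤ q * (K - s K B n) := key
      _ ≤ q * (K * q ^ n) := by apply mul_le_mul_of_nonneg_left ih hq0
      _ = K * q ^ (n+1) := by ring

theorem stmt_14 (K : ℕ) (hK : 2 ≤ K) (B : ℝ) (hB : 0 < B) :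
    Tendsto (fun j : ℕ => g K B j) atTop (𝓝 0) := by
  have hKr : (0:ℝ) < K := by positivity
  set q := max (1/2 : ℝ) (1 - B/(K:ℝ)) with hq
  have hq0 : (0:ℝ) ≤ q := le_trans (by norm_num) (le_max_left _ _)
  have hq1 : q < 1 := by
    apply max_lt (by norm_num)
    have : 0 < B / (K:ℝ) := by positivity
    linarith
  have hqhalf : (1/2 : ℝ) ≤ q := le_max_left _ _
  -- d tends to 0
  have hdle : ∀ j, (K:ℝ) - s K B j ≤ K * q ^ j := d_le hB hKr
  have hdpos : ∀ j, (0:ℝ) < K - s K B j := d_pos hKr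
  have hqpow : Tendsto (fun j : ℕ => q ^ j) atTop (𝓝 0) :=
    tendsto_pow_atTop_nhds_zero_of_lt_one hq0 hq1
  have hd0 : Tendsto (fun j : ℕ => (K:ℝ) - s K B j) atTop (𝓝 0) := by
    apply squeeze_zero (fun j => (hdpos j).le) hdle
    simpa using hqpow.const_mul (K:ℝ)
  -- c tends to 0
  have hcle : ∀ j, c K B j ≤ (K:ℝ) * q ^ (j-1) := by
    intro j
    cases j with
    | zero =>
      simp only [c]
      positivity
    | succ n =>
      simp only [c, Nat.add_sub_cancel]
      exact le_trans (min_le_left _ _) (by linarith [hdle n, hdpos n])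
  have hc0 : ∀ j, 0 ≤ c K B j := by
    intro j
    cases j with
    | zero => simp [c]
    | succ n => exact le_min (by linarith [hdpos n]) hB.le
  have hcten : Tendsto (fun j : ℕ => c K B j) atTop (𝓝 0) := by
    apply squeeze_zero hc0 hcle
    have h1 : Tendsto (fun j : ℕ => j - 1) atTop atTop := tendsto_sub_atTop_nat 1
    simpa using (hqpow.comp h1).const_mul (K:ℝ)
  have hsub : ∀ m : ℕ, Tendsto (fun j : ℕ => j - m) atTop atTop := tendsto_sub_atTop_nat
  -- Term 1
  have ht1 : Tendsto (fun j : ℕ => ((K:ℝ) - s K B (j-1)) / K * H2 (c K B j / K))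
      atTop (𝓝 0) := by
    have h1 : Tendsto (fun j : ℕ => ((K:ℝ) - s K B (j-1)) / K) atTop (𝓝 0) := by
      have := (hd0.comp (hsub 1)).div_const (K:ℝ)
      simpa using this
    have h2 : Tendsto (fun j : ℕ => H2 (c K B j / K)) atTop (𝓝 (H2 0)) := by
      apply continuous_H2.continuousAt.tendsto.comp
      simpa using hcten.div_const (K:ℝ)
    simpa using h1.mul h2
  -- Term 2
  have ht2 : Tendsto (fun j : ℕ => (c K B (j-1) * ((K:ℝ) - s K B (j-2)) / K^2) *
      H2 ((1/2) * c K B (j-1) / ((K:ℝ) - s K B (j-2)))) atTop (𝓝 0) := by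
    have heq : (fun j : ℕ =>
        (c K B (j-1) * ((K:ℝ) - s K B (j-2)) / K^2) *
          H2 ((1/2) * c K B (j-1) / ((K:ℝ) - s K B (j-2))))
        =ᶠ[atTop] (fun j : ℕ =>
        (c K B (j-1) * ((K:ℝ) - s K B (j-2)) / K^2) * H2 (1/4)) := by
      have hsmall : ∀ᶠ j : ℕ in atTop, (K:ℝ) - s K B (j-2) ≤ 2 * B := by
        have := (hd0.comp (hsub 2)).eventually (eventually_le_nhds (by linarith : (0:ℝ) < 2*B))
        simpa using this
      filter_upwards [hsmall, eventually_ge_atTop 2] with j hdj hj2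
      have hj : j - 1 = (j - 2) + 1 := by omega
      have hcval : c K B (j-1) = ((K:ℝ) - s K B (j-2)) / 2 := by
        rw [hj]
        simp only [c]
        exact min_eq_left (by linarith)
      have hd := hdpos (j-2)
      rw [hcval]
      have hne : ((K:ℝ) - s (K:ℝ) B (j-2)) ≠ 0 := ne_of_gt hd
      have harg : (1/2:ℝ) * (((K:ℝ) - s (K:ℝ) B (j-2))/2) / ((K:ℝ) - s (K:ℝ) B (j-2)) = 1/4 := by
        field_simp
        ring
      rw [harg]
    apply Tendsto.congr' heq.symm
    have h1 : Tendsto (fun j : ℕ => c K B (j-1) * ((K:ℝ) - s K B (j-2)) / K^2)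
        atTop (𝓝 0) := by
      have := ((hcten.comp (hsub 1)).mul (hd0.comp (hsub 2))).div_const ((K:ℝ)^2)
      simpa using this
    simpa using h1.mul_const (H2 (1/4))
  -- Term 3
  have ht3 : Tendsto (fun j : ℕ => ∑ k ∈ Finset.Icc 1 (j-3),
      (1/(K:ℝ)) * ((c K B (k+1))^2 / K^2) * (1/2 : ℝ)^(2*(j-k-2)-1)) atTop (𝓝 0) := by
    have hub : ∀ᶠ j : ℕ in atTop, ∑ k ∈ Finset.Icc 1 (j-3),
        (1/(K:ℝ)) * ((c K B (k+1))^2 / K^2) * (1/2 : ℝ)^(2*(j-k-2)-1)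
        ≤ (j:ℝ) * (1/(4*(K:ℝ)) * q ^ j) := by
      filter_upwards [eventually_ge_atTop 5] with j hj5
      have hterm : ∀ k ∈ Finset.Icc 1 (j-3),
          (1/(K:ℝ)) * ((c K B (k+1))^2 / K^2) * (1/2 : ℝ)^(2*(j-k-2)-1)
          ≤ 1/(4*(K:ℝ)) * q ^ j := by
        intro k hk
        simp only [Finset.mem_Icc] at hk
        have hc_le : c K B (k+1) ≤ (K:ℝ) * q ^ k / 2 := by
          simp only [c]
          exact le_trans (min_le_left _ _) (by linarith [hdle k])
        have hcsq : (c K B (k+1))^2 ≤ ((K:ℝ) * q ^ k / 2)^2 :=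
          pow_le_pow_left₀ (hc0 (k+1)) hc_le 2
        have hhalf : ((1:ℝ)/2)^(2*(j-k-2)-1) ≤ q^(2*(j-k-2)-1) :=
          pow_le_pow_left₀ (by norm_num) hqhalf _
        have e1 : 2*k + (2*(j-k-2)-1) = 2*j - 5 := by omega
        have hqq : q ^ (2*j-5) ≤ q ^ j :=
          pow_le_pow_of_le_one hq0 hq1.le (by omega)
        calc (1/(K:ℝ)) * ((c K B (k+1))^2 / K^2) * (1/2 : ℝ)^(2*(j-k-2)-1)
            ≤ (1/(K:ℝ)) * (((K:ℝ) * q ^ k / 2)^2 / K^2) * q^(2*(j-k-2)-1) := by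
              apply mul_le_mul
              · apply mul_le_mul_of_nonneg_left _ (by positivity)
                exact div_le_div_of_nonneg_right hcsq (by positivity)
              · exact hhalf
              · positivity
              · positivity
          _ = 1/(4*(K:ℝ)) * (q ^ (2*k) * q^(2*(j-k-2)-1)) := by
              field_simp
              ring
          _ = 1/(4*(K:ℝ)) * q ^ (2*j-5) := by rw [← pow_add, e1]
          _ ≤ 1/(4*(K:ℝ)) * q ^ j := by
              apply mul_le_mul_of_nonneg_left hqq (by positivity)
      calc ∑ k ∈ Finset.Icc 1 (j-3),
            (1/(K:ℝ)) * ((c K B (k+1))^2 / K^2) * (1/2 : ℝ)^(2*(j-k-2)-1)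
          ≤ ∑ _k ∈ Finset.Icc 1 (j-3), (1/(4*(K:ℝ)) * q ^ j) :=
            Finset.sum_le_sum hterm
        _ = ((j-3 : ℕ):ℝ) * (1/(4*(K:ℝ)) * q ^ j) := by
            rw [Finset.sum_const, Nat.card_Icc]
            simp [nsmul_eq_mul]
        _ ≤ (j:ℝ) * (1/(4*(K:ℝ)) * q ^ j) := by
            apply mul_le_mul_of_nonneg_right _ (by positivity)
            exact_mod_cast Nat.cast_le.mpr (Nat.sub_le j 3)
    have hlb : ∀ j : ℕ, 0 ≤ ∑ k ∈ Finset.Icc 1 (j-3),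
        (1/(K:ℝ)) * ((c K B (k+1))^2 / K^2) * (1/2 : ℝ)^(2*(j-k-2)-1) := by
      intro j
      apply Finset.sum_nonneg
      intro k _
      positivity
    apply squeeze_zero' (Eventually.of_forall hlb) hub
    have := (tendsto_self_mul_const_pow_of_lt_one hq0 hq1).const_mul (1/(4*(K:ℝ)))
    simp only [mul_zero] at this
    apply this.congr
    intro j
    ring
  have := (ht1.add ht2).add ht3
  simpa [g] using this
end

section
/- If B ≥ K/2, then the gap between the outer and inner bounds has the closed form G(L) = (1/L)·Σ_{j=1}^{L} [2^{-(j-1)}·H₂(2^{-j}) + 1_{j≥2}·2^{3-2j}·H₂(1/4) + max(j-3, 0)·2^{3-2j}/K] for every integer L ≥ 1, where 1_{j≥2} equals 1 if j ≥ 2 and 0 if j = 1. -/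
open Finset Filter Topology

/-!
When `B ≥ K/2` the budget constraint never binds: every beam takes half of what is left,
so `K - s_j = K/2^j` and `c_j = K/2^j`. Substituting into `g_j`, the middle entropy term has
argument `c_{j-1} / (2 (K - s_{j-2})) = 1/4`, and every summand of the tail equals
`2^{3-2j}/K`, independently of `k`.
-/

theorem two_zpow_neg_natCast (n : ℕ) : (2 : ℝ) ^ (-(n : ℤ)) = (1 / 2) ^ n := by
  simp [zpow_neg, inv_pow]

section HalvingRegime

variable {K B : ℝ} (hK : 0 ≤ K) (hB : K / 2 ≤ B)
include hK hB

theorem sub_s_of_half_le (n : ℕ) : K - s K B n = K * (1 / 2) ^ n := by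
  induction n with
  | zero => simp [s]
  | succ n ih =>
    have hmin : min ((K - s K B n) / 2) B = (K - s K B n) / 2 := by
      refine min_eq_left ?_
      rw [ih]
      calc K * (1 / 2) ^ n / 2 ≤ K * 1 / 2 := by
            gcongr; exact pow_le_one₀ (by norm_num) (by norm_num)
        _ ≤ B := by linarith
    rw [s, hmin, pow_succ]
    linear_combination ih / 2

theorem c_succ_of_half_le (n : ℕ) : c K B (n + 1) = K * (1 / 2) ^ (n + 1) := by
  have h := sub_s_of_half_le hK hB (n + 1)
  rw [s, pow_succ] at h
  rw [c]
  linear_combination sub_s_of_half_le hK hB n - h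

end HalvingRegime

section ClosedForm

variable {K B : ℝ} (hK : 0 < K) (hB : K / 2 ≤ B)
include hK hB

theorem leading_term_of_half_le {j : ℕ} (hj : 1 ≤ j) :
    (K - s K B (j - 1)) / K * H2 (c K B j / K)
      = (2 : ℝ) ^ (-((j : ℤ) - 1)) * H2 ((2 : ℝ) ^ (-(j : ℤ))) := by
  obtain ⟨n, rfl⟩ : ∃ n, j = n + 1 := ⟨j - 1, by omega⟩
  have hexp : -(((n + 1 : ℕ) : ℤ) - 1) = -(n : ℤ) := by push_cast; ring
  rw [Nat.add_sub_cancel, sub_s_of_half_le hK.le hB, c_succ_of_half_le hK.le hB, hexp,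
    two_zpow_neg_natCast, two_zpow_neg_natCast, mul_div_cancel_left₀ _ hK.ne',
    mul_div_cancel_left₀ _ hK.ne']

theorem middle_term_of_half_le (j : ℕ) :
    c K B (j - 1) * (K - s K B (j - 2)) / K ^ 2
        * H2 ((1 / 2) * c K B (j - 1) / (K - s K B (j - 2)))
      = (if 2 ≤ j then (2 : ℝ) ^ (3 - 2 * (j : ℤ)) else 0) * H2 (1 / 4) := by
  obtain hj | ⟨m, rfl⟩ : j ≤ 1 ∨ ∃ m, j = m + 2 :=
    (le_or_gt j 1).imp_right fun h => ⟨j - 2, by omega⟩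
  · rw [Nat.sub_eq_zero_of_le hj, if_neg (by omega)]
    simp [c]
  · have hexp : 3 - 2 * ((m + 2 : ℕ) : ℤ) = -((2 * m + 1 : ℕ) : ℤ) := by push_cast; ring
    rw [if_pos (by omega), show m + 2 - 1 = m + 1 by omega, Nat.add_sub_cancel,
      c_succ_of_half_le hK.le hB, sub_s_of_half_le hK.le hB, hexp, two_zpow_neg_natCast]
    congr 2 <;> field_simp <;> ring

theorem tail_sum_of_half_le (j : ℕ) :
    ∑ k ∈ Icc 1 (j - 3),
        (1 / K) * ((c K B (k + 1)) ^ 2 / K ^ 2) * (1 / 2 : ℝ) ^ (2 * (j - k - 2) - 1)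
      = ((j - 3 : ℕ) : ℝ) * (2 : ℝ) ^ (3 - 2 * (j : ℤ)) / K := by
  have hterm : ∀ k ∈ Icc 1 (j - 3),
      (1 / K) * ((c K B (k + 1)) ^ 2 / K ^ 2) * (1 / 2 : ℝ) ^ (2 * (j - k - 2) - 1)
        = (2 : ℝ) ^ (3 - 2 * (j : ℤ)) / K := by
    intro k hk
    rw [mem_Icc] at hk
    have hexp : 3 - 2 * (j : ℤ) = -((2 * (j - k - 2) - 1 + 2 * (k + 1) : ℕ) : ℤ) := by
      push_cast [show 2 * (j - k - 2) - 1 + 2 * (k + 1) = 2 * j - 3 by omega]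
      omega
    rw [c_succ_of_half_le hK.le hB, hexp, two_zpow_neg_natCast, pow_add]
    field_simp
    ring
  rw [sum_congr rfl hterm, sum_const, Nat.card_Icc, Nat.add_sub_cancel, nsmul_eq_mul]
  ring

theorem g_eq_of_half_le {j : ℕ} (hj : 1 ≤ j) :
    g K B j = (2 : ℝ) ^ (-((j : ℤ) - 1)) * H2 ((2 : ℝ) ^ (-(j : ℤ)))
      + (if 2 ≤ j then (2 : ℝ) ^ (3 - 2 * (j : ℤ)) else 0) * H2 (1 / 4)
      + ((j - 3 : ℕ) : ℝ) * (2 : ℝ) ^ (3 - 2 * (j : ℤ)) / K := by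
  rw [g, leading_term_of_half_le hK hB hj, middle_term_of_half_le hK hB,
    tail_sum_of_half_le hK hB]

end ClosedForm

theorem stmt_17_general (K : ℕ) (hK : 2 ≤ K) (B : ℝ) (hB2 : (K : ℝ) / 2 ≤ B) :
    ∀ L : ℕ, 1 ≤ L →
      G K B L = (1 / (L : ℝ)) * ∑ j ∈ Finset.Icc 1 L,
        ((2 : ℝ)^(-((j : ℤ) - 1)) * H2 ((2 : ℝ)^(-(j : ℤ)))
          + (if 2 ≤ j then (2 : ℝ)^(3 - 2*(j : ℤ)) else 0) * H2 (1/4)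
          + ((j - 3 : ℕ) : ℝ) * (2 : ℝ)^(3 - 2*(j : ℤ)) / (K : ℝ)) := by
  intro L _
  have hK0 : (0 : ℝ) < K := by exact_mod_cast (by omega : 0 < K)
  rw [G]
  congr 1
  refine sum_congr rfl fun j hj => g_eq_of_half_le hK0 hB2 (mem_Icc.mp hj).1

theorem stmt_17 (K : ℕ) (hK : 2 ≤ K) (B : ℝ) (hB : 0 < B) (hB2 : (K : ℝ) / 2 ≤ B) :
    ∀ L : ℕ, 1 ≤ L →
      G K B L = (1 / (L : ℝ)) * ∑ j ∈ Finset.Icc 1 L,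
        ((2 : ℝ)^(-((j : ℤ) - 1)) * H2 ((2 : ℝ)^(-(j : ℤ)))
          + (if 2 ≤ j then (2 : ℝ)^(3 - 2*(j : ℤ)) else 0) * H2 (1/4)
          + ((j - 3 : ℕ) : ℝ) * (2 : ℝ)^(3 - 2*(j : ℤ)) / (K : ℝ)) :=
  stmt_17_general K hK B hB2
end
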